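/- The state space of the hypergraph H₇(18) — atoms {1,...,18} with blocks {1,2,3}, {1,4,5}, {1,6,7}, {2,8,9}, {2,10,11}, {3,12,13}, {3,14,15}, {4,8,12}, {4,10,14}, {5,11,15}, {5,16,17}, {6,8,18}, {6,10,16}, {7,9,15}, {7,12,17}, {9,13,16}, {11,13,18}, {14,17,18} — is affinely parametrized by (x,y,z) = (s(1), s(3), s(18)) over the polytope {0 ≤ x ≤ 1, 0 ≤ y ≤ 1, 0 ≤ z ≤ 1/2, x+y ≤ 1, x+z ≤ 1, y+z ≤ 1} in ℝ³, which has exactly 7 vertices: (0,0,0), (0,1,0), (1,0,0), (0,0,1/2), (0,1/2,1/2), (1/2,0,1/2), (1/2,1/2,1/2). -/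
import Mathlib


/-- The 18 blocks of the hypergraph H₇(18) on atoms {1,...,18}. -/
def H7Blocks : Finset (Finset ℕ) :=
  { {1,2,3}, {1,4,5}, {1,6,7}, {2,8,9}, {2,10,11}, {3,12,13}, {3,14,15},
    {4,8,12}, {4,10,14}, {5,11,15}, {5,16,17}, {6,8,18}, {6,10,16},
    {7,9,15}, {7,12,17}, {9,13,16}, {11,13,18}, {14,17,18} }

/-- A state on H₇(18): nonnegative on the atoms, summing to 1 on every block. -/
def H7IsState (s : ℕ → ℝ) : Prop :=
  (∀ a ∈ Finset.Icc 1 18, 0 ≤ s a) ∧ ∀ b ∈ H7Blocks, ∑ a ∈ b, s a = 1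

/-- The state of H₇(18) with parameters `x = s 1`, `y = s 3`, `z = s 18`:
`s 2 = 1 - x - y`, `s 17 = 1 - 2z`, value `x` on atoms 1, 8, 10; value `y` on atoms
3, 9, 11; value `1 - x - z` on atoms 4, 6; value `z` on atoms 5, 7, 12, 14, 16, 18;
value `1 - y - z` on atoms 13, 15. -/
noncomputable def H7StateOf (x y z : ℝ) : ℕ → ℝ := fun a =>
  if a ∈ ({1, 8, 10} : Finset ℕ) then x
  else if a ∈ ({3, 9, 11} : Finset ℕ) then y
  else if a ∈ ({18, 5, 7, 12, 14, 16} : Finset ℕ) then z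
  else if a = 2 then 1 - x - y
  else if a = 17 then 1 - 2*z
  else if a ∈ ({4, 6} : Finset ℕ) then 1 - x - z
  else 1 - y - z

/-- The polytope {0 ≤ x ≤ 1, 0 ≤ y ≤ 1, 0 ≤ z ≤ 1/2, x+y ≤ 1, x+z ≤ 1, y+z ≤ 1}. -/
def H7Poly : Set (ℝ × ℝ × ℝ) :=
  {p | 0 ≤ p.1 ∧ p.1 ≤ 1 ∧ 0 ≤ p.2.1 ∧ p.2.1 ≤ 1 ∧ 0 ≤ p.2.2 ∧ p.2.2 ≤ 1/2 ∧
       p.1 + p.2.1 ≤ 1 ∧ p.1 + p.2.2 ≤ 1 ∧ p.2.1 + p.2.2 ≤ 1}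

def H7Verts : Set (ℝ × ℝ × ℝ) :=
  {(0, 0, 0), (0, 1, 0), (1, 0, 0), (0, 0, 1/2), (0, 1/2, 1/2),
   (1/2, 0, 1/2), (1/2, 1/2, 1/2)}

lemma convex_H7Poly : Convex ℝ H7Poly := by
  rintro ⟨x,y,z⟩ hp ⟨x',y',z'⟩ hq a b ha hb hab
  obtain ⟨p1,p2,p3,p4,p5,p6,p7,p8,p9⟩ := hp
  obtain ⟨q1,q2,q3,q4,q5,q6,q7,q8,q9⟩ := hq
  dsimp only at *
  refine ⟨?_,?_,?_,?_,?_,?_,?_,?_,?_⟩ <;>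
    simp only [Prod.smul_mk, Prod.mk_add_mk, smul_eq_mul] <;>
    linarith [mul_nonneg ha p1, mul_nonneg hb q1, mul_nonneg ha p3, mul_nonneg hb q3,
      mul_nonneg ha p5, mul_nonneg hb q5,
      mul_le_mul_of_nonneg_left p2 ha, mul_le_mul_of_nonneg_left q2 hb,
      mul_le_mul_of_nonneg_left p4 ha, mul_le_mul_of_nonneg_left q4 hb,
      mul_le_mul_of_nonneg_left p6 ha, mul_le_mul_of_nonneg_left q6 hb,
      mul_le_mul_of_nonneg_left p7 ha, mul_le_mul_of_nonneg_left q7 hb,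
      mul_le_mul_of_nonneg_left p8 ha, mul_le_mul_of_nonneg_left q8 hb,
      mul_le_mul_of_nonneg_left p9 ha, mul_le_mul_of_nonneg_left q9 hb]

lemma mem_hull_of_weights (x y z l1 l2 l3 l4 l5 l6 l7 : ℝ)
    (h1 : 0 ≤ l1) (h2 : 0 ≤ l2) (h3 : 0 ≤ l3) (h4 : 0 ≤ l4) (h5 : 0 ≤ l5)
    (h6 : 0 ≤ l6) (h7 : 0 ≤ l7)
    (hsum : l1 + l2 + l3 + l4 + l5 + l6 + l7 = 1)
    (hx : l3 + l6/2 + l7/2 = x) (hy : l2 + l5/2 + l7/2 = y)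
    (hz : l4/2 + l5/2 + l6/2 + l7/2 = z) :
    (x, y, z) ∈ convexHull ℝ H7Verts := by
  set w : Fin 7 → ℝ := ![l1,l2,l3,l4,l5,l6,l7] with hw
  set v : Fin 7 → ℝ × ℝ × ℝ := ![(0, 0, 0), (0, 1, 0), (1, 0, 0), (0, 0, 1/2), (0, 1/2, 1/2),
      (1/2, 0, 1/2), (1/2, 1/2, 1/2)] with hv
  have hw0 : ∀ i ∈ (Finset.univ : Finset (Fin 7)), 0 ≤ w i := by
    intro i _; fin_cases i; exacts [h1,h2,h3,h4,h5,h6,h7]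
  have hws : ∑ i : Fin 7, w i = 1 := by
    rw [hw]; simp [Fin.sum_univ_succ]; linarith
  have hvmem : ∀ i ∈ (Finset.univ : Finset (Fin 7)), v i ∈ H7Verts := by
    intro i _; fin_cases i
    · exact Set.mem_insert _ _
    · exact Set.mem_insert_of_mem _ (Set.mem_insert _ _)
    · exact Set.mem_insert_of_mem _ (Set.mem_insert_of_mem _ (Set.mem_insert _ _))
    · exact Set.mem_insert_of_mem _ (Set.mem_insert_of_mem _ (Set.mem_insert_of_mem _
        (Set.mem_insert _ _)))
    · exact Set.mem_insert_of_mem _ (Set.mem_insert_of_mem _ (Set.mem_insert_of_mem _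
        (Set.mem_insert_of_mem _ (Set.mem_insert _ _))))
    · exact Set.mem_insert_of_mem _ (Set.mem_insert_of_mem _ (Set.mem_insert_of_mem _
        (Set.mem_insert_of_mem _ (Set.mem_insert_of_mem _ (Set.mem_insert _ _)))))
    · exact Set.mem_insert_of_mem _ (Set.mem_insert_of_mem _ (Set.mem_insert_of_mem _
        (Set.mem_insert_of_mem _ (Set.mem_insert_of_mem _ (Set.mem_insert_of_mem _ rfl)))))
  have hmem := Finset.centerMass_mem_convexHull (Finset.univ : Finset (Fin 7)) hw0
    (by rw [hws]; norm_num) hvmem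
  have hcm : Finset.univ.centerMass w v = (x, y, z) := by
    rw [Finset.centerMass_eq_of_sum_1 _ _ hws, hw, hv]
    simp only [Fin.sum_univ_succ, Fin.sum_univ_zero, Matrix.cons_val_zero,
      Matrix.cons_val_succ, Prod.smul_mk, Prod.mk_add_mk, smul_eq_mul, add_zero,
      Prod.mk.injEq]
    norm_num
    refine ⟨by linarith, by linarith, by linarith⟩
  rwa [hcm] at hmem

lemma hull_eq : H7Poly = convexHull ℝ H7Verts := by
  apply Set.Subset.antisymm
  · rintro ⟨x,y,z⟩ hp
    obtain ⟨p1,p2,p3,p4,p5,p6,p7,p8,p9⟩ := hp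
    dsimp only at *
    rcases le_total x z with hxz | hxz <;> rcases le_total y z with hyz | hyz
    · rcases le_total (2*x + 2*y) (2*z) with hs | hs
      · exact mem_hull_of_weights x y z (1-2*z) 0 0 (2*z-2*x-2*y) (2*y) (2*x) 0
          (by linarith) le_rfl le_rfl (by linarith) (by linarith) (by linarith) le_rfl
          (by ring) (by ring) (by ring) (by ring)
      · exact mem_hull_of_weights x y z (1-2*z) 0 0 0 (2*z-2*x) (2*z-2*y) (2*x+2*y-2*z)
          (by linarith) le_rfl le_rfl le_rfl (by linarith) (by linarith) (by linarith)
          (by ring) (by ring) (by ring) (by ring)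
    · exact mem_hull_of_weights x y z (1-y-z) (y-z) 0 0 (2*z-2*x) 0 (2*x)
        (by linarith) (by linarith) le_rfl le_rfl (by linarith) le_rfl (by linarith)
        (by ring) (by ring) (by ring) (by ring)
    · exact mem_hull_of_weights x y z (1-x-z) 0 (x-z) 0 0 (2*z-2*y) (2*y)
        (by linarith) le_rfl (by linarith) le_rfl le_rfl (by linarith) (by linarith)
        (by ring) (by ring) (by ring) (by ring)
    · exact mem_hull_of_weights x y z (1-x-y) (y-z) (x-z) 0 0 0 (2*z)
        (by linarith) (by linarith) (by linarith) le_rfl le_rfl le_rfl (by linarith)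
        (by ring) (by ring) (by ring) (by ring)
  · exact convexHull_min (by
      rintro v hv
      simp only [H7Verts, Set.mem_insert_iff, Set.mem_singleton_iff] at hv
      rcases hv with h|h|h|h|h|h|h <;> subst h <;> norm_num [H7Poly]) convex_H7Poly

lemma tight_le (u t p q c : ℝ) (hu : 0 < u) (ht : 0 < t) (hut : u + t = 1)
    (hp : p ≤ c) (hq : q ≤ c) (heq : u*p + t*q = c) : p = c ∧ q = c := by
  have h1 : u*(c-p) = t*(q-c) := by linear_combination c * hut - heq
  have h2 : u*(c-p) ≤ 0 := h1 ▸ mul_nonpos_of_nonneg_of_nonpos ht.le (by linarith)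
  have h3 : 0 ≤ u*(c-p) := mul_nonneg hu.le (by linarith)
  have h4 : c - p = 0 := by
    rcases mul_eq_zero.1 (le_antisymm h2 h3) with h | h
    · exact absurd h (ne_of_gt hu)
    · exact h
  have h5 : q - c = 0 := by
    rcases mul_eq_zero.1 (h1.symm.trans (le_antisymm h2 h3)) with h | h
    · exact absurd h (ne_of_gt ht)
    · exact h
  constructor <;> linarith

lemma tight_ge (u t p q : ℝ) (hu : 0 < u) (ht : 0 < t) (hut : u + t = 1)
    (hp : 0 ≤ p) (hq : 0 ≤ q) (heq : u*p + t*q = 0) : p = 0 ∧ q = 0 := by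
  have := tight_le u t (-p) (-q) 0 hu ht hut (by linarith) (by linarith) (by linear_combination -heq)
  constructor <;> linarith [this.1, this.2]

lemma extreme_eq : Set.extremePoints ℝ H7Poly = H7Verts := by
  apply Set.Subset.antisymm
  · rw [hull_eq]; exact extremePoints_convexHull_subset
  · intro p hp
    rw [mem_extremePoints]
    have hmem : p ∈ H7Poly := by
      rw [hull_eq]; exact subset_convexHull ℝ _ hp
    refine ⟨hmem, ?_⟩
    rintro ⟨a1,a2,a3⟩ ha ⟨b1,b2,b3⟩ hb ⟨u, t, hu, ht, hut, heq⟩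
    obtain ⟨pa1,pa2,pa3,pa4,pa5,pa6,pa7,pa8,pa9⟩ := ha
    obtain ⟨qb1,qb2,qb3,qb4,qb5,qb6,qb7,qb8,qb9⟩ := hb
    dsimp only at *
    simp only [H7Verts, Set.mem_insert_iff, Set.mem_singleton_iff] at hp
    simp only [Prod.smul_mk, Prod.mk_add_mk, smul_eq_mul] at heq
    rcases hp with h|h|h|h|h|h|h <;> subst h <;>
      simp only [Prod.mk.injEq] at heq ⊢ <;> obtain ⟨e1, e2, e3⟩ := heq
    · obtain ⟨r1, r2⟩ := tight_ge u t a1 b1 hu ht hut pa1 qb1 e1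
      obtain ⟨r3, r4⟩ := tight_ge u t a2 b2 hu ht hut pa3 qb3 e2
      obtain ⟨r5, r6⟩ := tight_ge u t a3 b3 hu ht hut pa5 qb5 e3
      exact ⟨⟨r1, r3, r5⟩, ⟨r2, r4, r6⟩⟩
    · obtain ⟨r3, r4⟩ := tight_le u t a2 b2 1 hu ht hut pa4 qb4 e2
      refine ⟨⟨by linarith, r3, by linarith⟩, ⟨by linarith, r4, by linarith⟩⟩
    · obtain ⟨r1, r2⟩ := tight_le u t a1 b1 1 hu ht hut pa2 qb2 e1
      refine ⟨⟨r1, by linarith, by linarith⟩, ⟨r2, by linarith, by linarith⟩⟩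
    · obtain ⟨r1, r2⟩ := tight_ge u t a1 b1 hu ht hut pa1 qb1 e1
      obtain ⟨r3, r4⟩ := tight_ge u t a2 b2 hu ht hut pa3 qb3 e2
      obtain ⟨r5, r6⟩ := tight_le u t a3 b3 (1/2) hu ht hut pa6 qb6 e3
      exact ⟨⟨r1, r3, r5⟩, ⟨r2, r4, r6⟩⟩
    · obtain ⟨r1, r2⟩ := tight_ge u t a1 b1 hu ht hut pa1 qb1 e1
      obtain ⟨r5, r6⟩ := tight_le u t a3 b3 (1/2) hu ht hut pa6 qb6 e3
      obtain ⟨r7, r8⟩ := tight_le u t (a2+a3) (b2+b3) 1 hu ht hut pa9 qb9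
        (by ring_nf; ring_nf at e2 e3; linarith)
      exact ⟨⟨r1, by linarith, r5⟩, ⟨r2, by linarith, r6⟩⟩
    · obtain ⟨r3, r4⟩ := tight_ge u t a2 b2 hu ht hut pa3 qb3 e2
      obtain ⟨r5, r6⟩ := tight_le u t a3 b3 (1/2) hu ht hut pa6 qb6 e3
      obtain ⟨r7, r8⟩ := tight_le u t (a1+a3) (b1+b3) 1 hu ht hut pa8 qb8
        (by ring_nf; ring_nf at e1 e3; linarith)
      exact ⟨⟨by linarith, r3, r5⟩, ⟨by linarith, r4, r6⟩⟩
    · obtain ⟨r5, r6⟩ := tight_le u t a3 b3 (1/2) hu ht hut pa6 qb6 e3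
      obtain ⟨r7, r8⟩ := tight_le u t (a1+a3) (b1+b3) 1 hu ht hut pa8 qb8
        (by ring_nf; ring_nf at e1 e3; linarith)
      obtain ⟨r9, r10⟩ := tight_le u t (a2+a3) (b2+b3) 1 hu ht hut pa9 qb9
        (by ring_nf; ring_nf at e2 e3; linarith)
      exact ⟨⟨by linarith, by linarith, r5⟩, ⟨by linarith, by linarith, r6⟩⟩

set_option maxHeartbeats 2000000 in
/-- The state space of H₇(18) is affinely parametrized by
`(x, y, z) = (s 1, s 3, s 18)` over the polytope
{0 ≤ x ≤ 1, 0 ≤ y ≤ 1, 0 ≤ z ≤ 1/2, x+y ≤ 1, x+z ≤ 1, y+z ≤ 1} in ℝ³, which has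
exactly 7 vertices: (0,0,0), (0,1,0), (1,0,0), (0,0,1/2), (0,1/2,1/2), (1/2,0,1/2),
(1/2,1/2,1/2). -/
theorem H7_state_space :
    (∀ s : ℕ → ℝ, H7IsState s →
      (s 1, s 3, s 18) ∈ H7Poly ∧
      ∀ a ∈ Finset.Icc 1 18, s a = H7StateOf (s 1) (s 3) (s 18) a) ∧
    (∀ p ∈ H7Poly, H7IsState (H7StateOf p.1 p.2.1 p.2.2)) ∧
    Set.extremePoints ℝ H7Poly =
      {(0, 0, 0), (0, 1, 0), (1, 0, 0), (0, 0, 1/2), (0, 1/2, 1/2),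
       (1/2, 0, 1/2), (1/2, 1/2, 1/2)} := by
  refine ⟨?_, ?_, ?_⟩
  · intro s hs
    obtain ⟨hpos, hb⟩ := hs
    simp only [H7Blocks, Finset.forall_mem_insert] at hb
    norm_num [Finset.sum_insert, Finset.mem_insert, Finset.mem_singleton] at hb
    obtain ⟨e1,e2,e3,e4,e5,e6,e7,e8,e9,e10,e11,e12,e13,e14,e15,e16,e17,e18⟩ := hb
    have h1 := hpos 1 (by norm_num); have h2 := hpos 2 (by norm_num)
    have h3 := hpos 3 (by norm_num); have h4 := hpos 4 (by norm_num)
    have h5 := hpos 5 (by norm_num); have h6 := hpos 6 (by norm_num)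
    have h7 := hpos 7 (by norm_num); have h8 := hpos 8 (by norm_num)
    have h9 := hpos 9 (by norm_num); have h10 := hpos 10 (by norm_num)
    have h11 := hpos 11 (by norm_num); have h12 := hpos 12 (by norm_num)
    have h13 := hpos 13 (by norm_num); have h14 := hpos 14 (by norm_num)
    have h15 := hpos 15 (by norm_num); have h16 := hpos 16 (by norm_num)
    have h17 := hpos 17 (by norm_num); have h18 := hpos 18 (by norm_num)
    constructor
    · exact ⟨h1, by linarith, h3, by linarith, h18, by linarith, by linarith,
        by linarith, by linarith⟩
    · intro a ha
      simp only [Finset.mem_Icc] at ha; obtain ⟨ha1, ha2⟩ := ha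
      interval_cases a <;> norm_num [H7StateOf] <;> linarith
  · rintro ⟨x, y, z⟩ hp
    obtain ⟨q1,q2,q3,q4,q5,q6,q7,q8,q9⟩ := hp
    dsimp only at *
    constructor
    · intro a ha
      simp only [Finset.mem_Icc] at ha; obtain ⟨ha1, ha2⟩ := ha
      interval_cases a <;> norm_num [H7StateOf] <;> linarith
    · intro b hb
      fin_cases hb <;>
        norm_num [H7StateOf, Finset.sum_insert, Finset.mem_insert, Finset.mem_singleton] <;>
        ring_nf
  · exact extreme_eq
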